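/- For every nonzero integer a and every n ≥ 0, the higher-order Bernoulli-type polynomials satisfy Σ_{k=l}^{m} k·a_k · B_{n,a+1}^q(x+k) = (1 − n/a) · B_{n,a}^q(x) + (n·x/a) · B_{n-1,a}^q(x). -/

import Mathlib

/-!
With `Δ(t) = ∑ c_k e^{kt}` and `J_a = (t/Δ)^a`, the left side has exponential generating
function `J_{a+1} Δ' e^{xt}`. Differentiating `J_1 Δ = t` and using the power rule
`J_a' = a J_{a-1} J_1'` gives `a J_{a+1} Δ' = a J_a - t J_a'`, and
`t J_a' e^{xt} = t ∂_t (J_a e^{xt}) - x t J_a e^{xt}`. Reading off the coefficient of `tⁿ/n!`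
turns `t ∂_t` into multiplication by `n` and `x t` into `n x B_{n-1,a}`.
-/

open PowerSeries

namespace Derivation

variable {R A : Type*} [CommSemiring R] [CommRing A] [Algebra R A] (D : Derivation R A A)
  {J : ℤ → A} (hJ0 : J 0 = 1) (hJadd : ∀ a b, J (a + b) = J a * J b)
include hJ0 hJadd

theorem leibniz_zpow_family (a : ℤ) : D (J a) = a • (J (a - 1) * D (J 1)) := by
  -- The defect `f` satisfies `f (a + 1) = J 1 * f a` with `J 1` a unit, so it vanishes with `f 0`.
  set f : ℤ → A := fun a => D (J a) - a • (J (a - 1) * D (J 1))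
  have hstep (a : ℤ) : f (a + 1) = J 1 * f a := by
    have hJpred : J 1 * J (a - 1) = J a := by rw [← hJadd]; ring_nf
    simp only [f, hJadd a 1, leibniz, smul_eq_mul, zsmul_eq_mul, add_sub_cancel_right]
    push_cast
    linear_combination ((a : A) * D (J 1)) * hJpred
  have hinv : J (-1) * J 1 = 1 := by rw [← hJadd]; simpa using hJ0
  have hf0 : f 0 = 0 := by simp [f, hJ0]
  suffices f a = 0 from sub_eq_zero.mp this
  clear_value f
  induction a using Int.induction_on with
  | zero => exact hf0
  | succ i ih => rw [hstep, ih, mul_zero]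
  | pred i ih =>
    have := hstep (-i - 1)
    rw [sub_add_cancel, ih] at this
    linear_combination (-J (-1)) * this - f (-i - 1) * hinv

theorem zsmul_mul_apply_of_mul_eq {t Δ : A} (ht : D t = 1) (hΔ : J 1 * Δ = t) (a : ℤ) :
    a • (J (a + 1) * D Δ) = a • J a - t * D (J a) := by
  have hder : J 1 * D Δ + Δ * D (J 1) = 1 := by
    simpa [leibniz, smul_eq_mul, ht] using congrArg D hΔ
  have hJpred : J 1 * J (a - 1) = J a := by rw [← hJadd]; ring_nf
  rw [D.leibniz_zpow_family hJ0 hJadd, hJadd, ← hΔ]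
  simp only [zsmul_eq_mul]
  linear_combination (a * J a) * hder + (a * Δ * D (J 1)) * hJpred

end Derivation

namespace PowerSeries

variable {A B : Type*} [CommRing A] [Algebra ℚ A] [CommRing B] [Algebra ℚ B]

def egf : (ℕ → A) →ₗ[ℚ] A⟦X⟧ where
  toFun p := mk fun n => (n.factorial : ℚ)⁻¹ • p n
  map_add' p q := by ext; simp
  map_smul' r p := by ext; simp [smul_comm r]

@[simp]
theorem coeff_egf (p : ℕ → A) (n : ℕ) : coeff n (egf p) = (n.factorial : ℚ)⁻¹ • p n := by
  simp [egf]

theorem egf_smul (r : ℚ) (p : ℕ → A) : (egf fun n => r • p n) = r • egf p :=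
  map_smul egf r p

theorem egf_sum {ι : Type*} (s : Finset ι) (p : ι → ℕ → A) :
    (egf fun n => ∑ k ∈ s, p k n) = ∑ k ∈ s, egf (p k) := by
  rw [← map_sum, Finset.sum_fn]

theorem egf_injective : Function.Injective (egf : (ℕ → A) → A⟦X⟧) := by
  intro p q h
  funext n
  have := congrArg (coeff n) h
  simp only [coeff_egf] at this
  exact smul_right_injective A (inv_ne_zero (by positivity)) this

theorem egf_pow (x : A) : egf (x ^ ·) = rescale x (exp A) := by
  ext n
  simp [Algebra.smul_def, mul_comm]

theorem map_egf (f : A →+* B) (p : ℕ → A) :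
    map f (egf p) = egf fun n => f (p n) := by
  ext n
  simp only [coeff_map, coeff_egf, map_rat_smul]

theorem C_mul_egf (x : A) (p : ℕ → A) : C x * egf p = egf fun n => x * p n := by
  ext n
  simp

theorem X_mul_egf (p : ℕ → A) : X * egf p = egf fun n => (n : ℚ) • p (n - 1) := by
  ext (_ | n)
  · simp
  · rw [coeff_succ_X_mul, coeff_egf, coeff_egf, smul_smul, Nat.add_sub_cancel, Nat.factorial_succ]
    congr 1
    push_cast
    field_simp

theorem derivative_egf (p : ℕ → A) : d⁄dX A (egf p) = egf fun n => p (n + 1) := by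
  ext n
  rw [coeff_derivative, coeff_egf, coeff_egf, mul_comm, ← Nat.cast_succ, ← nsmul_eq_mul,
    ← Nat.cast_smul_eq_nsmul ℚ, smul_smul, Nat.factorial_succ]
  congr 1
  push_cast
  field_simp

theorem X_mul_derivative_egf (p : ℕ → A) : X * d⁄dX A (egf p) = egf fun n => (n : ℚ) • p n := by
  rw [derivative_egf, X_mul_egf]
  congr 1
  funext n
  cases n <;> simp

theorem derivative_egf_pow (x : A) : d⁄dX A (egf (x ^ ·)) = C x * egf (x ^ ·) := by
  simp only [derivative_egf, C_mul_egf, pow_succ']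

-- Over `R = S[X]`, `Derivation.leibniz` itself fails to elaborate: `PowerSeries.algebraPolynomial`
-- is a second, non-defeq `Algebra S[X] S[X]⟦X⟧` instance.
theorem derivative_mul {R : Type*} [CommSemiring R] (f g : R⟦X⟧) :
    d⁄dX R (f * g) = f * d⁄dX R g + g * d⁄dX R f :=
  (d⁄dX R).leibniz f g

theorem derivative_map {R S : Type*} [CommSemiring R] [CommSemiring S] (f : R →+* S) (φ : R⟦X⟧) :
    d⁄dX S (map f φ) = map f (d⁄dX R φ) := by
  ext n
  simp [coeff_derivative]

theorem derivative_egf_sum_mul_pow {ι : Type*} (s : Finset ι) (c x : ι → ℚ) :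
    d⁄dX ℚ (egf fun n => ∑ k ∈ s, c k * x k ^ n) = ∑ k ∈ s, (x k * c k) • egf (x k ^ ·) := by
  simp only [derivative_egf, ← map_smul, ← map_sum, Finset.sum_fn]
  congr 1
  funext n
  exact Finset.sum_congr rfl fun k _ => by simp only [Pi.smul_apply, smul_eq_mul, pow_succ']; ring

end PowerSeries

theorem egf_comp_X_add_C {φ : ℚ⟦X⟧} {P : ℕ → Polynomial ℚ}
    (hP : map Polynomial.C φ * egf (Polynomial.X ^ ·) = egf P) (k : ℚ) :
    egf (fun n => (P n).comp (Polynomial.X + Polynomial.C k)) =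
      map Polynomial.C (φ * egf (k ^ ·)) * egf (Polynomial.X ^ ·) := by
  set f := Polynomial.compRingHom (Polynomial.X + Polynomial.C k)
  have hfC : f.comp Polynomial.C = Polynomial.C := by ext r; simp [f]
  calc egf (fun n => (P n).comp (Polynomial.X + Polynomial.C k))
      = map f (map Polynomial.C φ) * map f (egf (Polynomial.X ^ ·)) := by
        rw [← map_mul, hP, map_egf]; rfl
    _ = map Polynomial.C φ * egf ((Polynomial.X + Polynomial.C k) ^ ·) := by
        rw [← RingHom.comp_apply, ← map_comp, hfC, map_egf]
        simp [f]
    _ = map Polynomial.C φ * (egf (Polynomial.X ^ ·) * map Polynomial.C (egf (k ^ ·))) := by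
        rw [map_egf]
        simp only [map_pow, egf_pow, exp_mul_exp_eq_exp_add]
    _ = _ := by rw [map_mul]; ring

theorem egf_sum_smul_comp_X_add_C {φ : ℚ⟦X⟧} {P : ℕ → Polynomial ℚ}
    (hP : map Polynomial.C φ * egf (Polynomial.X ^ ·) = egf P) {ι : Type*} (s : Finset ι)
    (r x : ι → ℚ) :
    (egf fun n => ∑ k ∈ s, r k • (P n).comp (Polynomial.X + Polynomial.C (x k))) =
      map Polynomial.C (φ * ∑ k ∈ s, r k • egf (x k ^ ·)) * egf (Polynomial.X ^ ·) := by
  rw [egf_sum, Finset.mul_sum, map_sum, Finset.sum_mul]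
  refine Finset.sum_congr rfl fun k _ => ?_
  rw [egf_smul, egf_comp_X_add_C hP, mul_smul_comm, map_rat_smul, smul_mul_assoc]

theorem map_C_X_mul_derivative_mul_egf {φ : ℚ⟦X⟧} {P : ℕ → Polynomial ℚ}
    (hP : map Polynomial.C φ * egf (Polynomial.X ^ ·) = egf P) :
    map Polynomial.C (X * d⁄dX ℚ φ) * egf (Polynomial.X ^ ·) =
      egf fun n => (n : ℚ) • P n - (n : ℚ) • (Polynomial.X * P (n - 1)) := by
  have hleib : d⁄dX (Polynomial ℚ) (egf P) = map Polynomial.C (d⁄dX ℚ φ) * egf (Polynomial.X ^ ·)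
      + C Polynomial.X * egf P := by
    rw [← hP, derivative_mul, derivative_egf_pow, derivative_map]
    ring
  have hX : X * d⁄dX (Polynomial ℚ) (egf P) - C Polynomial.X * (X * egf P)
      = map Polynomial.C (X * d⁄dX ℚ φ) * egf (Polynomial.X ^ ·) := by
    rw [hleib, map_mul, map_X]
    ring
  rw [← hX, X_mul_derivative_egf, X_mul_egf, C_mul_egf, ← map_sub]
  congr 1
  funext n
  simp only [Pi.sub_apply, mul_smul_comm]

theorem bernoulli_type_order_raising_general
    (l m : ℤ) (c : ℤ → ℚ)
    -- `J a = (t/Δ_q(t))^a`, where the indicator `Δ_q(t)` has coefficients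
    -- `(∑_k c_k kⁿ)/n!`:
    (J : ℤ → PowerSeries ℚ)
    (hJ0 : J 0 = 1)
    (hJadd : ∀ a b : ℤ, J (a + b) = J a * J b)
    (hJ1 : J 1 * (PowerSeries.mk fun n =>
        (∑ k ∈ Finset.Icc l m, c k * (k : ℚ) ^ n) / (n.factorial : ℚ)) = PowerSeries.X)
    -- the higher-order Bernoulli-type polynomials `B a n = B_{n,a}^q`:
    (B : ℤ → ℕ → Polynomial ℚ)
    (hB : ∀ a : ℤ,
      (PowerSeries.map (Polynomial.C : ℚ →+* Polynomial ℚ) (J a)) *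
        (PowerSeries.mk fun n => ((n.factorial : ℚ)⁻¹) • (Polynomial.X : Polynomial ℚ) ^ n) =
      PowerSeries.mk fun n => ((n.factorial : ℚ)⁻¹) • B a n)
    (a : ℤ) (ha : a ≠ 0) (n : ℕ) :
    ∑ k ∈ Finset.Icc l m,
        ((k : ℚ) * c k) • (B (a + 1) n).comp (Polynomial.X + Polynomial.C (k : ℚ)) =
      (1 - (n : ℚ) / (a : ℚ)) • B a n +
        ((n : ℚ) / (a : ℚ)) • (Polynomial.X * B a (n - 1)) := by
  set Δ : ℚ⟦X⟧ := egf fun n => ∑ k ∈ Finset.Icc l m, c k * (k : ℚ) ^ n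
  have hΔ : J 1 * Δ = X := by
    rw [← hJ1]
    congr 1
    ext n
    simp only [Δ, coeff_egf, coeff_mk, smul_eq_mul, div_eq_inv_mul]
  have hB' (a : ℤ) : map Polynomial.C (J a) * egf (Polynomial.X ^ ·) = egf (B a) := hB a
  have ha' : (a : ℚ) ≠ 0 := Int.cast_ne_zero.mpr ha
  have hkey : (a : ℚ) • (J (a + 1) * d⁄dX ℚ Δ) = (a : ℚ) • J a - X * d⁄dX ℚ (J a) := by
    simpa only [Int.cast_smul_eq_zsmul] using
      (d⁄dX ℚ).zsmul_mul_apply_of_mul_eq hJ0 hJadd derivative_X hΔ a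
  have hLHS : (egf fun n => ∑ k ∈ Finset.Icc l m,
        ((k : ℚ) * c k) • (B (a + 1) n).comp (Polynomial.X + Polynomial.C (k : ℚ))) =
      map Polynomial.C (J (a + 1) * d⁄dX ℚ Δ) * egf (Polynomial.X ^ ·) := by
    rw [egf_sum_smul_comp_X_add_C (hB' (a + 1)) _ (fun k : ℤ => (k : ℚ) * c k) (fun k : ℤ => (k : ℚ)),
      derivative_egf_sum_mul_pow]
  suffices (a : ℚ) • egf (fun n => ∑ k ∈ Finset.Icc l m,
        ((k : ℚ) * c k) • (B (a + 1) n).comp (Polynomial.X + Polynomial.C (k : ℚ))) =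
      (a : ℚ) • egf (fun n => (1 - (n : ℚ) / (a : ℚ)) • B a n +
        ((n : ℚ) / (a : ℚ)) • (Polynomial.X * B a (n - 1))) from
    congrFun (egf_injective (smul_right_injective _ ha' this)) n
  calc _ = map Polynomial.C ((a : ℚ) • (J (a + 1) * d⁄dX ℚ Δ)) * egf (Polynomial.X ^ ·) := by
        rw [hLHS, map_rat_smul, smul_mul_assoc]
    _ = (a : ℚ) • egf (B a) -
          egf fun n => (n : ℚ) • B a n - (n : ℚ) • (Polynomial.X * B a (n - 1)) := by
        rw [hkey, map_sub, sub_mul, map_rat_smul, smul_mul_assoc, hB',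
          map_C_X_mul_derivative_mul_egf (hB' a)]
    _ = _ := by
        rw [← map_smul, ← map_sub, ← map_smul]
        congr 1
        funext j
        simp only [Pi.sub_apply, Pi.smul_apply, smul_add, smul_smul]
        rw [mul_sub, mul_one, mul_div_cancel₀ _ ha']
        module

/-- ∑_{k=l}^{m} k·a_k·B_{n,a+1}^q(x+k) = (1 − n/a)·B_{n,a}^q(x) + (n·x/a)·B_{n-1,a}^q(x) for every nonzero integer a and n ≥ 0. -/
theorem bernoulli_type_order_raising
    (l m : ℤ) (hlm : l < m) (c : ℤ → ℚ)
    (hc0 : ∑ k ∈ Finset.Icc l m, c k = 0)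
    (hc1 : ∑ k ∈ Finset.Icc l m, (k : ℚ) * c k = 1)
    -- `J a = (t/Δ_q(t))^a`, where the indicator `Δ_q(t)` has coefficients
    -- `(∑_k c_k kⁿ)/n!`:
    (J : ℤ → PowerSeries ℚ)
    (hJ0 : J 0 = 1)
    (hJadd : ∀ a b : ℤ, J (a + b) = J a * J b)
    (hJ1 : J 1 * (PowerSeries.mk fun n =>
        (∑ k ∈ Finset.Icc l m, c k * (k : ℚ) ^ n) / (n.factorial : ℚ)) = PowerSeries.X)
    -- the higher-order Bernoulli-type polynomials `B a n = B_{n,a}^q`: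
    (B : ℤ → ℕ → Polynomial ℚ)
    (hB : ∀ a : ℤ,
      (PowerSeries.map (Polynomial.C : ℚ →+* Polynomial ℚ) (J a)) *
        (PowerSeries.mk fun n => ((n.factorial : ℚ)⁻¹) • (Polynomial.X : Polynomial ℚ) ^ n) =
      PowerSeries.mk fun n => ((n.factorial : ℚ)⁻¹) • B a n)
    (a : ℤ) (ha : a ≠ 0) (n : ℕ) :
    ∑ k ∈ Finset.Icc l m,
        ((k : ℚ) * c k) • (B (a + 1) n).comp (Polynomial.X + Polynomial.C (k : ℚ)) =
      (1 - (n : ℚ) / (a : ℚ)) • B a n +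
        ((n : ℚ) / (a : ℚ)) • (Polynomial.X * B a (n - 1)) :=
  bernoulli_type_order_raising_general l m c J hJ0 hJadd hJ1 B hB a ha n
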